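/- arXiv:1601.06689 — 2 statements merged into one kernel-verified Lean document; each statement's English description precedes it below -/
import Mathlib

section
/- Let F be any field and let V_1,…,V_n ∈ F^2 be vectors under which all conflicts of an index coding problem are resolved. Then for any two messages i and i' lying in the same alignment set, the vectors V_i and V_{i'} span a one-dimensional space; i.e., each is a nonzero scalar multiple of the other. -/
/-!
Common definitions: an index coding problem with `n` messages (indexed by `Fin n`),
`T ≥ 1` receivers, demand sets `D j` and side-information sets `S j`.
-/

/-- An index coding problem with `n` messages. -/
structure ICP (n : ℕ) where
  T : ℕ
  hT : 1 ≤ T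
  D : Fin T → Finset (Fin n)
  S : Fin T → Finset (Fin n)
  hDS : ∀ j, Disjoint (D j) (S j)

namespace ICP

variable {n : ℕ}

/-- The interfering set `Interf_k(j)`: all messages other than `k` not in the side
information of receiver `j`, provided `k ∈ D j`; empty otherwise. -/
def Interf (P : ICP n) (k : Fin n) (j : Fin P.T) : Finset (Fin n) :=
  if k ∈ P.D j then Finset.univ \ insert k (P.S j) else ∅

/-- All conflicts are resolved by the assignment `V` of `L`-length vectors over `F`
to the messages: for every message `k` and receiver `j`, `V k` is outside the span of
the vectors assigned to `Interf_k(j)`. -/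
def Resolved (P : ICP n) (F : Type) [Field F] {L : ℕ} (V : Fin n → Fin L → F) : Prop :=
  ∀ (k : Fin n) (j : Fin P.T),
    V k ∉ Submodule.span F (V '' (P.Interf k j : Set (Fin n)))

/-- Rate `1/L` feasibility: there exist a finite field `F` and an assignment of
`L`-length vectors over `F` resolving all conflicts. -/
def RateFeasible (P : ICP n) (L : ℕ) : Prop :=
  ∃ (F : Type) (_ : Field F) (_ : Fintype F) (V : Fin n → Fin L → F),
    P.Resolved F V

/-- Adjacency in the alignment graph: `i ≠ i'` both interfere at a receiver `j`
demanding some message `k ∉ {i, i'}`. -/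
def AlignAdj (P : ICP n) (i i' : Fin n) : Prop :=
  i ≠ i' ∧ ∃ (j : Fin P.T) (k : Fin n), k ∈ P.D j ∧ k ≠ i ∧ k ≠ i' ∧
    i ∈ P.Interf k j ∧ i' ∈ P.Interf k j

/-- The alignment graph. -/
def alignGraph (P : ICP n) : SimpleGraph (Fin n) where
  Adj := P.AlignAdj
  symm := ⟨by
    rintro a b ⟨hne, j, k, h1, h2, h3, h4, h5⟩
    exact ⟨hne.symm, j, k, h1, h3, h2, h5, h4⟩⟩
  loopless := ⟨by rintro a ⟨hne, -⟩; exact hne rfl⟩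

/-- Two messages lie in the same alignment set (connected component of the
alignment graph). -/
def SameAlignSet (P : ICP n) (i i' : Fin n) : Prop :=
  P.alignGraph.Reachable i i'

/-- Messages `i` and `k` are in conflict. -/
def InConflict (P : ICP n) (i k : Fin n) : Prop :=
  (∃ j, k ∈ P.D j ∧ i ∈ P.Interf k j) ∨ (∃ j, i ∈ P.D j ∧ k ∈ P.Interf i j)

/-- There is an internal conflict: a conflict between two messages lying in the
same alignment set. -/
def HasInternalConflict (P : ICP n) : Prop :=
  ∃ i k, P.InConflict i k ∧ P.SameAlignSet i k

/-- The conflict hypergraph, given as the set of unordered pairs `{{k}, Interf_k(j)}`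
over all receivers `j` and all demands `k ∈ D j`. -/
def conflictHypergraph (P : ICP n) : Set (Sym2 (Finset (Fin n))) :=
  {e | ∃ (j : Fin P.T) (k : Fin n), k ∈ P.D j ∧ e = s({k}, P.Interf k j)}

/-- The problem is groupcast: every message is demanded by at least one receiver. -/
def Groupcast (P : ICP n) : Prop := ∀ k : Fin n, ∃ j, k ∈ P.D j

/-- `i 0, i 1, i 2, i 3` form an acyclic subset of messages of size 4. -/
def AcyclicSubset4 (P : ICP n) (i : Fin 4 → Fin n) : Prop :=
  Function.Injective i ∧
    ∃ j : Fin 4 → Fin P.T, ∀ m : Fin 4, i m ∈ P.D (j m) ∧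
      ∀ m' : Fin 4, m' < m → i m' ∈ P.Interf (i m) (j m)

/-- The alignment set (connected component) of the vertex `v` has both a fork
(a vertex of degree at least 3) and a cycle all of whose vertices lie in it. -/
def HasForkAndCycle (P : ICP n) (v : Fin n) : Prop :=
  (∃ u, P.alignGraph.Reachable v u ∧ 3 ≤ (P.alignGraph.neighborSet u).ncard) ∧
  (∃ (u : Fin n) (c : P.alignGraph.Walk u u), c.IsCycle ∧
      ∀ x ∈ c.support, P.alignGraph.Reachable v x)

/-- A triangular interfering set: a 3-element set of messages simultaneously
interfering at some receiver, at least two of which are in conflict. -/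
def TriangularSet (P : ICP n) (W : Finset (Fin n)) : Prop :=
  W.card = 3 ∧ (∃ (j : Fin P.T) (k : Fin n), k ∈ P.D j ∧ W ⊆ P.Interf k j) ∧
    ∃ i i', i ∈ W ∧ i' ∈ W ∧ i ≠ i' ∧ P.InConflict i i'

/-- Two distinct triangular interfering sets are adjacent: they meet in exactly
two messages which are in conflict. -/
def TriAdj (P : ICP n) (W1 W2 : Finset (Fin n)) : Prop :=
  P.TriangularSet W1 ∧ P.TriangularSet W2 ∧ W1 ≠ W2 ∧
    ∃ i i', i ≠ i' ∧ W1 ∩ W2 = {i, i'} ∧ P.InConflict i i'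

/-- Two triangular interfering sets are connected: some finite sequence of
triangular interfering sets, with consecutive members adjacent, joins them. -/
def TriConnected (P : ICP n) (W1 W2 : Finset (Fin n)) : Prop :=
  P.TriangularSet W1 ∧ P.TriangularSet W2 ∧ Relation.ReflTransGen P.TriAdj W1 W2

/-- `W'` is a type-2 alignment set: the union of a maximal family of pairwise
connected triangular interfering sets. -/
def IsType2AlignSet (P : ICP n) (W' : Finset (Fin n)) : Prop :=
  ∃ 𝒯 : Set (Finset (Fin n)), 𝒯.Nonempty ∧
    (∀ W ∈ 𝒯, P.TriangularSet W) ∧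
    (∀ W1 ∈ 𝒯, ∀ W2 ∈ 𝒯, P.TriConnected W1 W2) ∧
    (∀ 𝒯' : Set (Finset (Fin n)), 𝒯 ⊆ 𝒯' → (∀ W ∈ 𝒯', P.TriangularSet W) →
      (∀ W1 ∈ 𝒯', ∀ W2 ∈ 𝒯', P.TriConnected W1 W2) → 𝒯' = 𝒯) ∧
    (W' : Set (Fin n)) = ⋃ W ∈ 𝒯, (W : Set (Fin n))

/-- The interfering set of message `k` at receiver `j` in the `W'`-restricted
index coding problem (its demand sets are `D j ∩ W'`, side information `S j ∩ W'`,
and message set `W'`). -/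
def rInterf (P : ICP n) (W' : Finset (Fin n)) (k : Fin n) (j : Fin P.T) :
    Finset (Fin n) :=
  if k ∈ P.D j ∩ W' then P.Interf k j ∩ W' else ∅

/-- Adjacency in the alignment graph of the `W'`-restricted problem. -/
def rAlignAdj (P : ICP n) (W' : Finset (Fin n)) (i i' : Fin n) : Prop :=
  i ≠ i' ∧ ∃ (j : Fin P.T) (k : Fin n), k ∈ P.D j ∩ W' ∧ k ≠ i ∧ k ≠ i' ∧
    i ∈ P.rInterf W' k j ∧ i' ∈ P.rInterf W' k j

/-- The alignment graph of the `W'`-restricted problem (messages outside `W'`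
are isolated vertices). -/
def rAlignGraph (P : ICP n) (W' : Finset (Fin n)) : SimpleGraph (Fin n) where
  Adj := P.rAlignAdj W'
  symm := ⟨by
    rintro a b ⟨hne, j, k, h1, h2, h3, h4, h5⟩
    exact ⟨hne.symm, j, k, h1, h3, h2, h5, h4⟩⟩
  loopless := ⟨by rintro a ⟨hne, -⟩; exact hne rfl⟩

/-- Conflict in the `W'`-restricted problem. -/
def rInConflict (P : ICP n) (W' : Finset (Fin n)) (i k : Fin n) : Prop :=
  (∃ j, k ∈ P.D j ∩ W' ∧ i ∈ P.rInterf W' k j) ∨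
  (∃ j, i ∈ P.D j ∩ W' ∧ k ∈ P.rInterf W' i j)

/-- There is a `W'`-restricted internal conflict: a conflict of the restricted
problem between two messages in the same `W'`-restricted alignment set. -/
def HasRestrictedInternalConflict (P : ICP n) (W' : Finset (Fin n)) : Prop :=
  ∃ i k, i ∈ W' ∧ k ∈ W' ∧ P.rInConflict W' i k ∧ (P.rAlignGraph W').Reachable i k

/-- The `W'`-restricted index coding problem is rate `1/2` feasible: there exist a
finite field `F` and vectors `V i ∈ F²` for `i ∈ W'` such that for every `k ∈ W'`
and every receiver `j`, `V k ∉ span {V i : i ∈ Interf_k(j) ∩ W'}`. -/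
def RestrictedRateHalfFeasible (P : ICP n) (W' : Finset (Fin n)) : Prop :=
  ∃ (F : Type) (_ : Field F) (_ : Fintype F) (V : Fin n → Fin 2 → F),
    ∀ k ∈ W', ∀ j : Fin P.T,
      V k ∉ Submodule.span F (V '' ((P.Interf k j ∩ W') : Set (Fin n)))

end ICP

/-!
In `F²` two linearly independent vectors span everything. If `i` and `i'` are adjacent in
the alignment graph, both interfere with some demanded message `k` at a receiver `j`, so
`V k ∉ span {V i, V i'}`; hence `V i` and `V i'` are dependent, and being nonzero they span
the same line. This line is then constant along walks in the alignment graph.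
-/

theorem SimpleGraph.Reachable.eq_of_forall_adj {V α : Type*} {G : SimpleGraph V} {f : V → α}
    (hf : ∀ u v, G.Adj u v → f u = f v) {u v : V} (h : G.Reachable u v) : f u = f v := by
  obtain ⟨w⟩ := h
  induction w with
  | nil => rfl
  | cons hadj _ ih => exact (hf _ _ hadj).trans ih

theorem Submodule.span_singleton_eq_of_span_pair_ne_top {K M : Type*} [DivisionRing K]
    [AddCommGroup M] [Module K M] [FiniteDimensional K M] (hM : Module.finrank K M = 2)
    {u v : M} (hu : u ≠ 0) (hv : v ≠ 0) (h : span K {u, v} ≠ ⊤) : K ∙ u = K ∙ v := by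
  have hW : Module.finrank K (span K {u, v}) ≤ 1 := by
    have := Submodule.finrank_lt h
    omega
  have hline {x : M} (hx : x ≠ 0) (hxW : x ∈ span K {u, v}) : K ∙ x = span K {u, v} :=
    Submodule.eq_of_le_of_finrank_le ((span_singleton_le_iff_mem _ _).2 hxW)
      (hW.trans (finrank_span_singleton hx).ge)
  rw [hline hu (subset_span (by simp)), hline hv (subset_span (by simp))]

namespace ICP

variable {n : ℕ} {P : ICP n} {F : Type} [Field F] {L : ℕ} {V : Fin n → Fin L → F}

theorem Resolved.ne_zero (hres : P.Resolved F V) (k : Fin n) : V k ≠ 0 := fun h0 =>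
  hres k ⟨0, P.hT⟩ (h0 ▸ Submodule.zero_mem _)

theorem Resolved.span_pair_ne_top_of_alignAdj (hres : P.Resolved F V) {i i' : Fin n}
    (h : P.alignGraph.Adj i i') : Submodule.span F {V i, V i'} ≠ ⊤ := by
  obtain ⟨-, j, k, -, -, -, hi, hi'⟩ := h
  intro htop
  have hle : Submodule.span F {V i, V i'} ≤
      Submodule.span F (V '' (P.Interf k j : Set (Fin n))) :=
    Submodule.span_mono (Set.pair_subset ⟨i, hi, rfl⟩ ⟨i', hi', rfl⟩)
  exact hres k j (hle (htop ▸ Submodule.mem_top))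

theorem Resolved.span_singleton_eq_of_sameAlignSet {V : Fin n → Fin 2 → F}
    (hres : P.Resolved F V) {i i' : Fin n} (h : P.SameAlignSet i i') :
    F ∙ V i = F ∙ V i' :=
  SimpleGraph.Reachable.eq_of_forall_adj (f := fun m => F ∙ V m)
    (fun _ _ hadj => Submodule.span_singleton_eq_of_span_pair_ne_top (Module.finrank_fin_fun F)
      (hres.ne_zero _) (hres.ne_zero _) (hres.span_pair_ne_top_of_alignAdj hadj)) h

end ICP

/-- If length-2 vectors `V` resolve all conflicts, then any two
messages in the same alignment set are assigned vectors spanning a one-dimensional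
space. -/
theorem sameAlignSet_span_one_dim {n : ℕ} (P : ICP n) (F : Type) [Field F]
    (V : Fin n → Fin 2 → F) (hres : P.Resolved F V)
    (i i' : Fin n) (h : P.SameAlignSet i i') :
    Module.finrank F (Submodule.span F ({V i, V i'} : Set (Fin 2 → F))) = 1 := by
  rw [Submodule.span_insert, ← hres.span_singleton_eq_of_sameAlignSet h, sup_idem]
  exact finrank_span_singleton (hres.ne_zero i)
end

section
/- If an index coding problem is rate 1/3 feasible (i.e., there exist a field F and vectors V_1,…,V_n ∈ F^3 under which all conflicts are resolved), then it has no acyclic subset of messages of size 4. -/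
/-
Along an acyclic subset `i₀, i₁, i₂, i₃`, each earlier message interferes with each later one,
so in a resolving assignment `V (i m)` avoids the span of `V (i m')` for `m' < m`. Such a
triangular family is linearly independent, and four independent vectors do not fit in `F³`.
-/

theorem linearIndependent_of_notMem_span_image_Iio {K V : Type*} [DivisionRing K]
    [AddCommGroup V] [Module K V] {k : ℕ} {v : Fin k → V}
    (hv : ∀ m, v m ∉ Submodule.span K (v '' Set.Iio m)) : LinearIndependent K v := by
  induction k with
  | zero => exact linearIndependent_empty_type
  | succ k ih =>
    have hinit_image (m : Fin k) : Fin.init v '' Set.Iio m = v '' Set.Iio m.castSucc := by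
      rw [Fin.init_def, ← Set.image_image v, Fin.image_castSucc_Iio]
    have hrange : Set.range (Fin.init v) = v '' Set.Iio (Fin.last k) := by
      rw [Fin.init_def, Set.range_comp' v, Fin.range_castSucc]
      congr 1
    refine linearIndependent_finSucc'.mpr ⟨ih fun m => ?_, hrange ▸ hv (Fin.last k)⟩
    exact hinit_image m ▸ hv m.castSucc

namespace ICP

variable {n : ℕ}

theorem Resolved.notMem_span_of_subset_interf {P : ICP n} {F : Type} [Field F] {L : ℕ}
    {V : Fin n → Fin L → F} (hV : P.Resolved F V) {k : Fin n} {j : Fin P.T}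
    {s : Set (Fin n)} (hs : s ⊆ P.Interf k j) : V k ∉ Submodule.span F (V '' s) :=
  fun hk => hV k j (Submodule.span_mono (Set.image_mono hs) hk)

theorem AcyclicSubset4.linearIndependent {P : ICP n} {F : Type} [Field F] {L : ℕ}
    {V : Fin n → Fin L → F} (hV : P.Resolved F V) {i : Fin 4 → Fin n}
    (hi : P.AcyclicSubset4 i) : LinearIndependent F (V ∘ i) := by
  obtain ⟨-, j, hij⟩ := hi
  refine linearIndependent_of_notMem_span_image_Iio fun m => ?_
  rw [Function.comp_apply, Set.image_comp]
  exact hV.notMem_span_of_subset_interf (j := j m) <| by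
    rintro _ ⟨m', hm', rfl⟩
    exact (hij m).2 m' hm'

end ICP

/-- A rate `1/3` feasible index coding problem has no acyclic
subset of messages of size 4. -/
theorem rateThird_no_acyclic_subset {n : ℕ} (P : ICP n)
    (h : ∃ (F : Type) (_ : Field F) (V : Fin n → Fin 3 → F), P.Resolved F V) :
    ¬ ∃ i : Fin 4 → Fin n, P.AcyclicSubset4 i := by
  rintro ⟨i, hi⟩
  obtain ⟨F, _, V, hV⟩ := h
  simpa using (hi.linearIndependent hV).fintype_card_le_finrank
end
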